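/- Let n ≥ 1 and let α be a partition of n. The value of the irreducible character ζ^α of S_n at an n-cycle equals (−1)^r if α is the hook (n − r, 1^r) for some 0 ≤ r < n, and equals 0 if α is not a hook. -/

import Mathlib

open Finsupp
open scoped Classical

/-- The row index of `k` in the standard tabloid of shape `α`: the least `i` such that
`k < α 0 + ⋯ + α i`. -/
noncomputable def rowIdx (α : ℕ →₀ ℤ) (k : ℕ) : ℕ := sInf {i | (k : ℤ) < ∑ j ∈ Finset.range (i + 1), α j}

/-- The Young subgroup of `S_n` associated to `α`: the stabilizer of the standard tabloid
whose rows are the consecutive blocks of `{0, …, n-1}` of sizes `α 0, α 1, …`. -/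
def youngSubgroup (n : ℕ) (α : ℕ →₀ ℤ) : Subgroup (Equiv.Perm (Fin n)) where
  carrier := {σ | ∀ k : Fin n, rowIdx α (σ k) = rowIdx α k}
  one_mem' := fun _ => rfl
  mul_mem' := by
    intro a b ha hb k
    simpa [Equiv.Perm.mul_apply] using (ha (b k)).trans (hb k)
  inv_mem' := by
    intro a ha k
    have := ha (a⁻¹ k)
    simp at this
    exact this.symm

/-- The value at `g` of the permutation character of `G` acting on the cosets of `H`:
the number of fixed cosets.  This is the value of the character induced from the
trivial character of `H`. -/
noncomputable def permCharValue {n : ℕ} (H : Subgroup (Equiv.Perm (Fin n)))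
    (g : Equiv.Perm (Fin n)) : ℤ :=
  Nat.card {x : Equiv.Perm (Fin n) ⧸ H // g • x = x}

/-- `ξ^α`, as a function on `S_n`: the permutation character induced from the trivial
character of the Young subgroup `S_α` when `α` is nonnegative with `|α| = n`, and `0`
otherwise. -/
noncomputable def xi (n : ℕ) (α : ℕ →₀ ℤ) (g : Equiv.Perm (Fin n)) : ℤ :=
  if (∀ i, 0 ≤ α i) ∧ (α.sum fun _ v => v) = (n : ℤ) then permCharValue (youngSubgroup n α) g
  else 0

/-- An `α`-tabloid: a sequence of pairwise disjoint subsets of `{0,…,n-1}` with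
`|t i| = α i` for every `i`. -/
def IsTabloid (n : ℕ) (α : ℕ →₀ ℤ) (t : ℕ → Finset (Fin n)) : Prop :=
  (∀ i j, i ≠ j → Disjoint (t i) (t j)) ∧ ∀ i, ((t i).card : ℤ) = α i

/-- The multiset of (nonzero) parts of a finitely supported sequence. -/
def partsOf (β : ℕ →₀ ℕ) : Multiset ℕ := β.support.val.map β

/-- `σ` has cycle type `β` (with `1`s in `β` recording fixed points). -/
def HasCycleType {n : ℕ} (σ : Equiv.Perm (Fin n)) (β : ℕ →₀ ℕ) : Prop :=
  (β.sum fun _ v => v) = n ∧ σ.cycleType = Multiset.filter (fun k => 2 ≤ k) (partsOf β)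

/-- A nonnegative sequence regarded as an integer sequence. -/
noncomputable def natToZ (β : ℕ →₀ ℕ) : ℕ →₀ ℤ := Finsupp.mapRange Int.ofNat rfl β

/-- The virtual character `χ^α = ∑_{σ ∈ S_l} sgn σ · ξ^{α + σ - id_l}` (0-indexed,
the sequence `α + σ - id_l` has `i`-th entry `α i + σ i - i`). -/
noncomputable def chi (n l : ℕ) (α : ℕ →₀ ℤ) (g : Equiv.Perm (Fin n)) : ℤ :=
  ∑ σ : Equiv.Perm (Fin l),
    (Equiv.Perm.sign σ : ℤ) *
      xi n (α + ∑ i : Fin l, Finsupp.single (i : ℕ) (((σ i : ℕ) : ℤ) - (i : ℕ))) g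

/-- `ζ^α`, the irreducible character of `S_n` corresponding to the partition `α` of `n`,
given by the determinantal formula `ζ^α = χ^α` (with `l = n ≥ l(α)`). -/
noncomputable def zeta (n : ℕ) (α : ℕ →₀ ℕ) (g : Equiv.Perm (Fin n)) : ℤ :=
  chi n n (natToZ α) g

/-- `α` is a partition of `n`: weakly decreasing with `|α| = n`. -/
def IsPartitionOf (α : ℕ →₀ ℕ) (n : ℕ) : Prop :=
  (∀ i, α (i + 1) ≤ α i) ∧ (α.sum fun _ v => v) = n

theorem Equiv.Perm.apply_inv_self {α : Type*} (f : Equiv.Perm α) (x : α) : f (f⁻¹ x) = x :=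
  Equiv.apply_symm_apply f x

theorem Equiv.Perm.inv_apply_self {α : Type*} (f : Equiv.Perm α) (x : α) : f⁻¹ (f x) = x :=
  Equiv.symm_apply_apply f x

lemma perm_antitone {α : ℕ →₀ ℕ} (h : ∀ i, α (i + 1) ≤ α i) {i j : ℕ} (hij : i ≤ j) :
    α j ≤ α i := by
  induction j with
  | zero => simpa [Nat.le_zero.mp hij] using le_refl _
  | succ k ih =>
    rcases Nat.lt_or_ge i (k+1) with h' | h'
    · exact (h k).trans (ih (Nat.lt_succ_iff.mp h'))
    · have : i = k + 1 := le_antisymm hij h'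
      simp [this]

lemma part_eq_zero {α : ℕ →₀ ℕ} {n : ℕ} (hα : IsPartitionOf α n) {j : ℕ} (hj : n ≤ j) :
    α j = 0 := by
  by_contra hne
  have h1 : ∀ i ∈ Finset.range (j+1), 1 ≤ α i := by
    intro i hi
    have := perm_antitone hα.1 (Nat.lt_succ_iff.mp (Finset.mem_range.mp hi))
    omega
  have hsub : Finset.range (j+1) ⊆ α.support := by
    intro i hi
    exact Finsupp.mem_support_iff.mpr (by have := h1 i hi; omega)
  have : j + 1 ≤ ∑ i ∈ Finset.range (j+1), α i := by
    simpa using Finset.card_nsmul_le_sum (Finset.range (j+1)) α 1 h1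
  have h2 : ∑ i ∈ Finset.range (j+1), α i ≤ ∑ i ∈ α.support, α i :=
    Finset.sum_le_sum_of_subset hsub
  have h3 : (α.sum fun _ v => v) = ∑ i ∈ α.support, α i := rfl
  have h4 := hα.2
  omega

lemma part0_pos {α : ℕ →₀ ℕ} {n : ℕ} (hα : IsPartitionOf α n) (hn : 0 < n) : 0 < α 0 := by
  by_contra h
  have h0 : α 0 = 0 := by omega
  have : ∀ i, α i = 0 := fun i => by
    have := perm_antitone hα.1 (Nat.zero_le i); omega
  have hz : (α.sum fun _ v => v) = 0 := Finset.sum_eq_zero fun i _ => this i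
  have := hα.2
  omega

lemma rowIdx_single {n : ℕ} (hn : 0 < n) (i0 : ℕ) {k : ℕ} (hk : k < n) :
    rowIdx (Finsupp.single i0 (n : ℤ)) k = i0 := by
  have hps : ∀ i : ℕ, (∑ j ∈ Finset.range (i + 1), (Finsupp.single i0 (n : ℤ)) j)
      = if i0 ≤ i then (n : ℤ) else 0 := by
    intro i
    rw [show (∑ j ∈ Finset.range (i + 1), (Finsupp.single i0 (n : ℤ)) j)
        = ∑ j ∈ Finset.range (i + 1), if i0 = j then (n : ℤ) else 0 from
      Finset.sum_congr rfl fun j _ => Finsupp.single_apply]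
    rw [Finset.sum_ite_eq]
    simp [Nat.lt_succ_iff]
  have hset : {i | (k : ℤ) < ∑ j ∈ Finset.range (i + 1), (Finsupp.single i0 (n : ℤ)) j}
      = {i | i0 ≤ i} := by
    ext i
    simp only [Set.mem_setOf_eq, hps]
    split_ifs with h
    · simp only [h, iff_true]
      exact_mod_cast hk
    · simp only [h, iff_false, not_lt]
      positivity
  rw [rowIdx, hset]
  exact le_antisymm (Nat.sInf_le (by simp)) (le_csInf ⟨i0, by simp⟩ fun b hb => hb)

lemma young_single {n : ℕ} (hn : 0 < n) (i0 : ℕ) :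
    youngSubgroup n (Finsupp.single i0 (n : ℤ)) = ⊤ := by
  ext σ
  simp only [Subgroup.mem_top, iff_true]
  show ∀ k : Fin n, _
  intro k
  rw [rowIdx_single hn i0 (σ k).isLt, rowIdx_single hn i0 k.isLt]

lemma permCharValue_top {n : ℕ} (g : Equiv.Perm (Fin n)) :
    permCharValue (⊤ : Subgroup (Equiv.Perm (Fin n))) g = 1 := by
  have hsub : Subsingleton (Equiv.Perm (Fin n) ⧸ (⊤ : Subgroup (Equiv.Perm (Fin n)))) :=
    QuotientGroup.subsingleton_quotient_top
  have : Nat.card {x : Equiv.Perm (Fin n) ⧸ (⊤ : Subgroup (Equiv.Perm (Fin n))) // g • x = x} = 1 := by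
    rw [Nat.card_eq_one_iff_unique]
    constructor
    · constructor
      intro a b
      exact Subtype.ext (hsub.allEq _ _)
    · exact ⟨⟨QuotientGroup.mk 1, hsub.allEq _ _⟩⟩
  rw [permCharValue, this]
  rfl

lemma const_of_trans {n : ℕ} {f : Fin n → ℕ} {τ : Equiv.Perm (Fin n)}
    (hτ : ∀ a b : Fin n, ∃ i : ℤ, (τ ^ i) a = b) (hf : ∀ k, f (τ k) = f k) :
    ∀ a b : Fin n, f a = f b := by
  have hinv : ∀ k, f (τ⁻¹ k) = f k := by
    intro k
    have := hf (τ⁻¹ k)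
    rw [Equiv.Perm.apply_inv_self] at this
    exact this.symm
  have key : ∀ i : ℤ, ∀ k, f ((τ ^ i) k) = f k := by
    intro i
    induction i using Int.induction_on with
    | zero => simp
    | succ m ih =>
      intro k
      have : (τ ^ ((m : ℤ) + 1)) k = (τ ^ (m : ℤ)) (τ k) := by
        rw [zpow_add_one, Equiv.Perm.mul_apply]
      rw [this, ih, hf]
    | pred m ih =>
      intro k
      have : (τ ^ (-(m : ℤ) - 1)) k = (τ ^ (-(m : ℤ))) (τ⁻¹ k) := by
        rw [zpow_sub_one, Equiv.Perm.mul_apply]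
      rw [this, ih, hinv]
  intro a b
  obtain ⟨i, hi⟩ := hτ a b
  rw [← hi, key]

lemma conc_of_rowIdx_const {n : ℕ} (hn : 0 < n) {β : ℕ →₀ ℤ}
    (hnn : ∀ i, 0 ≤ β i) (hsum : (β.sum fun _ v => v) = (n : ℤ)) (c : ℕ)
    (hc : ∀ k : Fin n, rowIdx β (k : ℕ) = c) :
    ∀ j, β j = if j = c then (n : ℤ) else 0 := by
  set P : ℕ → ℤ := fun m => ∑ j ∈ Finset.range m, β j with hP
  have hPmono : ∀ {a b : ℕ}, a ≤ b → P a ≤ P b := by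
    intro a b hab
    exact Finset.sum_le_sum_of_subset_of_nonneg (Finset.range_subset_range.mpr hab)
      (fun i _ _ => hnn i)
  have hPn : ∀ m, P m ≤ (n : ℤ) := by
    intro m
    have h1 : P m ≤ ∑ j ∈ Finset.range m ∪ β.support, β j :=
      Finset.sum_le_sum_of_subset_of_nonneg Finset.subset_union_left (fun i _ _ => hnn i)
    have h2 : ∑ j ∈ β.support, β j = ∑ j ∈ Finset.range m ∪ β.support, β j :=
      Finset.sum_subset Finset.subset_union_right
        (fun x _ hx => Finsupp.notMem_support_iff.mp hx)
    calc P m ≤ _ := h1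
      _ = ∑ j ∈ β.support, β j := h2.symm
      _ = (n : ℤ) := hsum
  have hPnonneg : ∀ m, 0 ≤ P m := fun m => Finset.sum_nonneg fun i _ => hnn i
  -- the sets defining rowIdx are nonempty
  set M := β.support.sup id with hM
  have hPM : P (M + 1) = (n : ℤ) := by
    rw [← hsum]
    refine (Finset.sum_subset ?_ (fun x _ hx => Finsupp.notMem_support_iff.mp hx)).symm
    intro j hj
    exact Finset.mem_range.mpr (Nat.lt_succ_of_le (Finset.le_sup (f := id) hj))
  have hmem : ∀ k : ℕ, k < n → M ∈ {i : ℕ | (k : ℤ) < ∑ j ∈ Finset.range (i + 1), β j} := by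
    intro k hk
    show (k : ℤ) < P (M + 1)
    rw [hPM]
    exact_mod_cast hk
  -- rowIdx values
  have hval : ∀ k : ℕ, (hk : k < n) → sInf {i : ℕ | (k : ℤ) < P (i + 1)} = c := by
    intro k hk
    have := hc ⟨k, hk⟩
    exact this
  -- P (c+1) = n
  have hclt : ((n : ℤ) - 1) < P (c + 1) := by
    have h1 := Nat.sInf_mem ⟨M, hmem (n - 1) (by omega)⟩
    rw [hval (n - 1) (by omega)] at h1
    have : ((n - 1 : ℕ) : ℤ) < P (c + 1) := h1
    omega
  have hPc1 : P (c + 1) = (n : ℤ) := le_antisymm (hPn _) (by omega)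
  -- P c = 0
  have hPc : P c = 0 := by
    rcases Nat.eq_zero_or_pos c with hc0 | hc0
    · simp [hc0, hP]
    · have hnotmem : c - 1 ∉ {i : ℕ | (((0:ℕ)) : ℤ) < P (i + 1)} := by
        apply Nat.notMem_of_lt_sInf
        rw [hval 0 hn]
        omega
      simp only [Set.mem_setOf_eq, not_lt] at hnotmem
      have : c - 1 + 1 = c := by omega
      rw [this] at hnotmem
      exact le_antisymm hnotmem (hPnonneg c)
  intro j
  rcases lt_trichotomy j c with hj | hj | hj
  · -- j < c : β j = 0
    rw [if_neg (by omega)]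
    have h1 : β j ≤ P c := Finset.single_le_sum (fun i _ => hnn i) (Finset.mem_range.mpr hj)
    exact le_antisymm (hPc ▸ h1) (hnn j)
  · rw [if_pos hj]
    have : P (c + 1) = P c + β c := Finset.sum_range_succ _ _
    rw [hPc1, hPc] at this
    rw [hj]
    omega
  · rw [if_neg (by omega)]
    have h1 : P (c + 1) + β j ≤ P (j + 1) := by
      have : P (c + 1) + β j ≤ P j + β j := by
        have := hPmono (show c + 1 ≤ j by omega)
        omega
      calc P (c + 1) + β j ≤ P j + β j := this
        _ = P (j + 1) := (Finset.sum_range_succ _ _).symm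
    have := hPn (j + 1)
    have := hnn j
    rw [hPc1] at h1
    omega

lemma trans_conj_inv {n : ℕ} {σ : Equiv.Perm (Fin n)}
    (hσ : ∀ a b : Fin n, ∃ i : ℤ, (σ ^ i) a = b) (g : Equiv.Perm (Fin n)) :
    ∀ a b : Fin n, ∃ i : ℤ, (((σ * g)⁻¹ * g) ^ i) a = b := by
  have hform : (σ * g)⁻¹ * g = g⁻¹ * σ⁻¹ * g := by
    rw [mul_inv_rev]
  intro a b
  obtain ⟨i, hi⟩ := hσ (g b) (g a)
  refine ⟨i, ?_⟩
  have hz : ((σ * g)⁻¹ * g) ^ i = g⁻¹ * (σ⁻¹) ^ i * g := by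
    rw [hform, show g⁻¹ * σ⁻¹ * g = g⁻¹ * σ⁻¹ * (g⁻¹)⁻¹ by rw [inv_inv], conj_zpow, inv_inv]
  rw [hz]
  have : ((σ⁻¹) ^ i) (g a) = g b := by
    rw [inv_zpow, ← zpow_neg]
    have : (σ ^ i) ((σ ^ (-i)) (g a)) = (σ ^ i) (g b) → (σ ^ (-i)) (g a) = g b :=
      fun h => (σ ^ i).injective h
    apply this
    rw [← Equiv.Perm.mul_apply, ← zpow_add, add_neg_cancel, zpow_zero, Equiv.Perm.one_apply, hi]
  simp only [Equiv.Perm.mul_apply, this, Equiv.Perm.inv_apply_self]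

lemma xi_eq {n : ℕ} (hn : 0 < n) {σ : Equiv.Perm (Fin n)}
    (hσ : ∀ a b : Fin n, ∃ i : ℤ, (σ ^ i) a = b) (β : ℕ →₀ ℤ) :
    xi n β σ = if ∃ i0, ∀ j, β j = if j = i0 then (n : ℤ) else 0 then 1 else 0 := by
  split_ifs with hconc
  · obtain ⟨i0, h⟩ := hconc
    have hβ : β = Finsupp.single i0 (n : ℤ) := by
      ext j
      rw [h j, Finsupp.single_apply]
      simp [eq_comm]
    subst hβ
    rw [xi, if_pos, young_single hn, permCharValue_top]
    constructor
    · intro i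
      rw [Finsupp.single_apply]
      split_ifs
      · positivity
      · rfl
    · rw [Finsupp.sum_single_index rfl]
  · rw [xi]
    split_ifs with h2
    · rw [permCharValue]
      have hempty : IsEmpty {x : Equiv.Perm (Fin n) ⧸ youngSubgroup n β // σ • x = x} := by
        constructor
        rintro ⟨x, hx⟩
        obtain ⟨g, rfl⟩ := QuotientGroup.mk_surjective x
        rw [MulAction.Quotient.smul_mk, QuotientGroup.eq] at hx
        have hτmem : ∀ k : Fin n, rowIdx β (((σ * g)⁻¹ * g) k) = rowIdx β k := hx
        have hconst := const_of_trans (f := fun k : Fin n => rowIdx β (k : ℕ)) (trans_conj_inv hσ g) hτmem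
        exact hconc ⟨rowIdx β ((⟨0, hn⟩ : Fin n) : ℕ),
          conc_of_rowIdx_const hn h2.1 h2.2 _ (fun k => hconst k ⟨0, hn⟩)⟩
      rw [Nat.card_of_isEmpty]
      rfl
    · rfl


lemma trans_of_hct {N : ℕ} {σ : Equiv.Perm (Fin (N + 1))}
    (hσ : HasCycleType σ (Finsupp.single 0 (N + 1))) :
    ∀ a b : Fin (N + 1), ∃ i : ℤ, (σ ^ i) a = b := by
  have hparts : partsOf (Finsupp.single 0 (N + 1)) = {N + 1} := by
    rw [partsOf, Finsupp.support_single_ne_zero _ (Nat.succ_ne_zero N)]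
    simp
  rcases Nat.eq_zero_or_pos N with h0 | hpos
  · subst h0
    intro a b
    refine ⟨0, ?_⟩
    simp only [zpow_zero, Equiv.Perm.one_apply]
    have h1 := a.isLt
    have h2 := b.isLt
    exact Fin.ext (by omega)
  · have hct : σ.cycleType = {N + 1} := by
      rw [hσ.2, hparts, Multiset.filter_singleton, if_pos (by omega)]
    have hcyc : σ.IsCycle := Equiv.Perm.card_cycleType_eq_one.mp (by rw [hct]; rfl)
    have hsupp : σ.support = Finset.univ := by
      apply Finset.eq_univ_of_card
      rw [← Equiv.Perm.sum_cycleType, hct]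
      simp
    intro a b
    exact hcyc.sameCycle
      (Equiv.Perm.mem_support.mp (hsupp ▸ Finset.mem_univ a))
      (Equiv.Perm.mem_support.mp (hsupp ▸ Finset.mem_univ b))

lemma shift_apply {n : ℕ} (τ : Equiv.Perm (Fin n)) (j : ℕ) :
    (∑ i : Fin n, Finsupp.single (i : ℕ) (((τ i : ℕ) : ℤ) - ((i : ℕ) : ℤ))) j
      = if h : j < n then ((τ ⟨j, h⟩ : ℕ) : ℤ) - (j : ℤ) else 0 := by
  rw [Finsupp.finset_sum_apply]
  split_ifs with h
  · rw [Finset.sum_eq_single (⟨j, h⟩ : Fin n)]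
    · simp
    · intro i _ hne
      apply Finsupp.single_eq_of_ne'
      intro hc
      exact hne (Fin.ext hc)
    · intro hmem
      exact absurd (Finset.mem_univ _) hmem
  · apply Finset.sum_eq_zero
    intro i _
    apply Finsupp.single_eq_of_ne'
    intro hc
    omega


lemma shift_apply' {n : ℕ} (τ : Equiv.Perm (Fin n)) (j : ℕ) :
    (∑ i : Fin n, Finsupp.single (i : ℕ) (((τ i : ℕ) : ℤ) - ((i : ℕ) : ℤ))) j
      = if h : j < n then ((τ ⟨j, h⟩ : ℕ) : ℤ) - (j : ℤ) else 0 := by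
  rw [Finsupp.finset_sum_apply]
  split_ifs with h
  · rw [Finset.sum_eq_single (⟨j, h⟩ : Fin n)]
    · simp
    · intro i _ hne
      apply Finsupp.single_eq_of_ne'
      intro hc
      exact hne (Fin.ext hc)
    · intro hmem
      exact absurd (Finset.mem_univ _) hmem
  · apply Finset.sum_eq_zero
    intro i _
    apply Finsupp.single_eq_of_ne'
    intro hc
    omega


lemma gamma_apply {n : ℕ} (α : ℕ →₀ ℕ) (τ : Equiv.Perm (Fin n)) (j : ℕ) :
    (natToZ α + ∑ i : Fin n, Finsupp.single (i : ℕ) (((τ i : ℕ) : ℤ) - ((i : ℕ) : ℤ))) j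
      = (α j : ℤ) + (if h : j < n then ((τ ⟨j, h⟩ : ℕ) : ℤ) - (j : ℤ) else 0) := by
  rw [Finsupp.add_apply, shift_apply']
  congr 1

lemma tau0_val {N r : ℕ} (hr : r < N + 1) {j : ℕ} (hj : j < N + 1) :
    (((Fin.cycleRange (⟨r, hr⟩ : Fin (N + 1)))⁻¹ ⟨j, hj⟩ : Fin (N + 1)) : ℕ)
      = if j = 0 then r else if j ≤ r then j - 1 else j := by
  set i : Fin (N + 1) := ⟨r, hr⟩
  set τ₀ := (Fin.cycleRange i)⁻¹
  rcases Nat.eq_zero_or_pos j with h0 | h0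
  · subst h0
    rw [if_pos rfl]
    have h : Fin.cycleRange i i = ⟨0, hj⟩ := by
      rw [Fin.cycleRange_self]
      rfl
    have : τ₀ ⟨0, hj⟩ = i := by
      rw [← h, Equiv.Perm.inv_apply_self]
    rw [this]
  · rw [if_neg (by omega)]
    by_cases hjr : j ≤ r
    · rw [if_pos hjr]
      have hj1 : j - 1 < N + 1 := by omega
      have hlt : (⟨j - 1, hj1⟩ : Fin (N + 1)) < i := by
        rw [Fin.lt_def]
        show j - 1 < r
        omega
      have h : Fin.cycleRange i ⟨j - 1, hj1⟩ = ⟨j, hj⟩ := by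
        apply Fin.ext
        rw [Fin.coe_cycleRange_of_lt hlt]
        show (j : ℕ) - 1 + 1 = j
        omega
      have h2 : τ₀ ⟨j, hj⟩ = ⟨j - 1, hj1⟩ := by
        rw [← h, Equiv.Perm.inv_apply_self]
      rw [h2]
    · rw [if_neg hjr]
      have hgt : i < (⟨j, hj⟩ : Fin (N + 1)) := by
        rw [Fin.lt_def]
        show r < j
        omega
      have h : Fin.cycleRange i ⟨j, hj⟩ = ⟨j, hj⟩ := Fin.cycleRange_of_gt hgt
      have : τ₀ ⟨j, hj⟩ = ⟨j, hj⟩ := by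
        rw [← h, Equiv.Perm.inv_apply_self, h]
      rw [this]

lemma perm_antitone2 {α : ℕ →₀ ℕ} (h : ∀ i, α (i + 1) ≤ α i) {i j : ℕ} (hij : i ≤ j) :
    α j ≤ α i := by
  induction j with
  | zero => simp [Nat.le_zero.mp hij]
  | succ k ih =>
    rcases Nat.lt_or_ge i (k+1) with h' | h'
    · exact (h k).trans (ih (Nat.lt_succ_iff.mp h'))
    · have : i = k + 1 := le_antisymm hij h'
      simp [this]

lemma part0_pos2 {α : ℕ →₀ ℕ} {n : ℕ} (hα : IsPartitionOf α n) (hn : 0 < n) : 0 < α 0 := by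
  by_contra h
  have h0 : α 0 = 0 := by omega
  have hall : ∀ i, α i = 0 := fun i => by
    have := perm_antitone2 hα.1 (Nat.zero_le i); omega
  have hz : (α.sum fun _ v => v) = 0 := Finset.sum_eq_zero fun i _ => hall i
  have := hα.2
  omega

lemma part_le {α : ℕ →₀ ℕ} {n : ℕ} (hα : IsPartitionOf α n) (i : ℕ) : α i ≤ n := by
  by_cases h : i ∈ α.support
  · have h1 : α i ≤ ∑ j ∈ α.support, α j :=
      Finset.single_le_sum (fun j _ => Nat.zero_le _) h
    have h2 : (α.sum fun _ v => v) = ∑ j ∈ α.support, α j := rfl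
    have := hα.2
    omega
  · simp [Finsupp.notMem_support_iff.mp h]

lemma part_eq_zero2 {α : ℕ →₀ ℕ} {n : ℕ} (hα : IsPartitionOf α n) {j : ℕ} (hj : n ≤ j) :
    α j = 0 := by
  by_contra hne
  have h1 : ∀ i ∈ Finset.range (j+1), 1 ≤ α i := by
    intro i hi
    have := perm_antitone2 hα.1 (Nat.lt_succ_iff.mp (Finset.mem_range.mp hi))
    omega
  have : j + 1 ≤ ∑ i ∈ Finset.range (j+1), α i := by
    simpa using Finset.card_nsmul_le_sum (Finset.range (j+1)) α 1 h1
  have hsub : Finset.range (j+1) ⊆ α.support := fun i hi =>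
    Finsupp.mem_support_iff.mpr (by have := h1 i hi; omega)
  have h2 : ∑ i ∈ Finset.range (j+1), α i ≤ ∑ i ∈ α.support, α i :=
    Finset.sum_le_sum_of_subset hsub
  have h3 : (α.sum fun _ v => v) = ∑ i ∈ α.support, α i := rfl
  have h4 := hα.2
  omega

lemma conc_i0_eq_zero {N : ℕ} {α : ℕ →₀ ℕ} (hα : IsPartitionOf α (N + 1))
    (τ : Equiv.Perm (Fin (N + 1))) (i0 : ℕ)
    (h : ∀ j, (natToZ α + ∑ i : Fin (N + 1),
        Finsupp.single (i : ℕ) (((τ i : ℕ) : ℤ) - ((i : ℕ) : ℤ))) j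
      = if j = i0 then ((N + 1 : ℕ) : ℤ) else 0) : i0 = 0 := by
  by_contra hne
  have h0 := h 0
  rw [gamma_apply, dif_pos (Nat.succ_pos N), if_neg (fun c => hne c.symm)] at h0
  have hα0 := part0_pos2 hα (Nat.succ_pos N)
  have hτ : (0 : ℤ) ≤ ((τ ⟨0, Nat.succ_pos N⟩ : ℕ) : ℤ) := by positivity
  omega

lemma hook_conc {N r : ℕ} {α : ℕ →₀ ℕ} (hα : IsPartitionOf α (N + 1)) (hr : r < N + 1)
    (h0 : α 0 = N + 1 - r) (h1 : ∀ i, 0 < i → α i = if i ≤ r then 1 else 0) :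
    ∀ j, (natToZ α + ∑ i : Fin (N + 1),
        Finsupp.single (i : ℕ) ((((Fin.cycleRange (⟨r, hr⟩ : Fin (N + 1)))⁻¹ i : ℕ) : ℤ)
          - ((i : ℕ) : ℤ))) j
      = if j = 0 then ((N + 1 : ℕ) : ℤ) else 0 := by
  intro j
  rw [gamma_apply]
  by_cases hj : j < N + 1
  · rw [dif_pos hj, tau0_val hr hj]
    rcases Nat.eq_zero_or_pos j with hj0 | hj0
    · subst hj0
      rw [if_pos rfl, if_pos rfl]
      omega
    · have hαj := h1 j hj0
      rw [if_neg (show ¬ j = 0 by omega), if_neg (show ¬ j = 0 by omega)]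
      by_cases hjr : j ≤ r
      · rw [if_pos hjr] at hαj ⊢
        rw [hαj]
        omega
      · rw [if_neg hjr] at hαj ⊢
        rw [hαj]
        omega
  · rw [dif_neg hj, if_neg (by omega), part_eq_zero2 hα (by omega)]
    simp

lemma hook_unique {N r : ℕ} {α : ℕ →₀ ℕ} (hα : IsPartitionOf α (N + 1)) (hr : r < N + 1)
    (h0 : α 0 = N + 1 - r) (h1 : ∀ i, 0 < i → α i = if i ≤ r then 1 else 0)
    (τ : Equiv.Perm (Fin (N + 1)))
    (hc : ∃ i0, ∀ j, (natToZ α + ∑ i : Fin (N + 1),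
        Finsupp.single (i : ℕ) (((τ i : ℕ) : ℤ) - ((i : ℕ) : ℤ))) j
      = if j = i0 then ((N + 1 : ℕ) : ℤ) else 0) :
    τ = (Fin.cycleRange (⟨r, hr⟩ : Fin (N + 1)))⁻¹ := by
  obtain ⟨i0, h⟩ := hc
  have hi0 : i0 = 0 := conc_i0_eq_zero hα τ i0 h
  subst hi0
  apply Equiv.ext
  rintro ⟨j, hj⟩
  apply Fin.ext
  have hgj := h j
  rw [gamma_apply, dif_pos hj] at hgj
  rw [show ((Fin.cycleRange (⟨r, hr⟩ : Fin (N + 1)))⁻¹ ⟨j, hj⟩ : ℕ)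
      = if j = 0 then r else if j ≤ r then j - 1 else j from tau0_val hr hj]
  rcases Nat.eq_zero_or_pos j with hj0 | hj0
  · subst hj0
    rw [if_pos rfl] at hgj
    rw [if_pos rfl]
    omega
  · have hαj := h1 j hj0
    rw [if_neg (by omega)] at hgj
    rw [if_neg (by omega)]
    by_cases hjr : j ≤ r
    · rw [if_pos hjr] at hαj ⊢
      rw [hαj] at hgj
      omega
    · rw [if_neg hjr] at hαj ⊢
      rw [hαj] at hgj
      omega

lemma two_le_of_nonhook {N : ℕ} {α : ℕ →₀ ℕ} (hα : IsPartitionOf α (N + 1))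
    (h : ¬ ∃ r < N + 1, α 0 = N + 1 - r ∧ ∀ i, 0 < i → α i = if i ≤ r then 1 else 0) :
    2 ≤ α 1 := by
  by_contra h2
  push_neg at h2
  apply h
  classical
  set s := ∑ j ∈ α.support.erase 0, α j with hs
  have hα0 := part0_pos2 hα (Nat.succ_pos N)
  have h0mem : 0 ∈ α.support := Finsupp.mem_support_iff.mpr (by omega)
  have hsum : α 0 + s = N + 1 := by
    have hA := hα.2
    have hB : (α.sum fun _ v => v) = ∑ j ∈ α.support, α j := rfl
    have hC : ∑ j ∈ α.support, α j = α 0 + ∑ j ∈ α.support.erase 0, α j :=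
      (Finset.add_sum_erase _ _ h0mem).symm
    omega
  have hle1 : ∀ i, 1 ≤ i → α i ≤ 1 := fun i hi =>
    le_trans (perm_antitone2 hα.1 hi) (by omega)
  have hub : ∀ i, 1 ≤ i → α i = 1 → i ≤ s := by
    intro i hi h1i
    have hsub : Finset.Icc 1 i ⊆ α.support.erase 0 := by
      intro j hj
      rw [Finset.mem_Icc] at hj
      refine Finset.mem_erase.mpr ⟨by omega, Finsupp.mem_support_iff.mpr ?_⟩
      have := perm_antitone2 hα.1 hj.2
      omega
    calc i = ∑ _j ∈ Finset.Icc 1 i, 1 := by simp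
      _ ≤ ∑ j ∈ Finset.Icc 1 i, α j :=
        Finset.sum_le_sum (fun j hj => by
          have := perm_antitone2 hα.1 (Finset.mem_Icc.mp hj).2
          omega)
      _ ≤ s := Finset.sum_le_sum_of_subset hsub
  have hlb : ∀ i, 1 ≤ i → α i = 0 → s < i := by
    intro i hi h0i
    have hsub : α.support.erase 0 ⊆ Finset.Icc 1 (i - 1) := by
      intro j hj
      rw [Finset.mem_erase, Finsupp.mem_support_iff] at hj
      rw [Finset.mem_Icc]
      refine ⟨by omega, ?_⟩
      by_contra hcon
      have : i ≤ j := by omega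
      have := perm_antitone2 hα.1 this
      omega
    have hcalc : s ≤ i - 1 := by
      calc s ≤ ∑ j ∈ Finset.Icc 1 (i - 1), α j := Finset.sum_le_sum_of_subset hsub
        _ ≤ ∑ _j ∈ Finset.Icc 1 (i - 1), 1 :=
          Finset.sum_le_sum (fun j hj => hle1 j (Finset.mem_Icc.mp hj).1)
        _ = i - 1 := by simp
    omega
  refine ⟨s, by omega, by omega, ?_⟩
  intro i hi
  rcases Nat.lt_or_ge (α i) 1 with hc | hc
  · have hz : α i = 0 := by omega
    rw [hz, if_neg]
    have := hlb i hi hz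
    omega
  · have h1i : α i = 1 := le_antisymm (hle1 i hi) hc
    rw [h1i, if_pos (hub i hi h1i)]

lemma nonhook_no_conc {N : ℕ} {α : ℕ →₀ ℕ} (hα : IsPartitionOf α (N + 1)) (h2 : 2 ≤ α 1) :
    ∀ (τ : Equiv.Perm (Fin (N + 1))) (i0 : ℕ),
      ¬ (∀ j, (natToZ α + ∑ i : Fin (N + 1),
          Finsupp.single (i : ℕ) (((τ i : ℕ) : ℤ) - ((i : ℕ) : ℤ))) j
        = if j = i0 then ((N + 1 : ℕ) : ℤ) else 0) := by
  intro τ i0 h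
  have hi0 := conc_i0_eq_zero hα τ i0 h
  subst hi0
  have hn2 : 1 < N + 1 := by
    have hA := part_le hα 0
    have hB := perm_antitone2 hα.1 (Nat.zero_le 1)
    omega
  have h1 := h 1
  rw [gamma_apply, dif_pos hn2, if_neg one_ne_zero] at h1
  have : (0 : ℤ) ≤ ((τ ⟨1, hn2⟩ : ℕ) : ℤ) := by positivity
  omega

/-- The value of `ζ^α` at an `n`-cycle is `(-1)^r` if `α` is the hook `(n-r, 1^r)` and `0`
if `α` is not a hook. -/
theorem stmt9 (N : ℕ) (α : ℕ →₀ ℕ) (hα : IsPartitionOf α (N + 1))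
    (σ : Equiv.Perm (Fin (N + 1))) (hσ : HasCycleType σ (Finsupp.single 0 (N + 1))) :
    (∀ r < N + 1,
      (α 0 = N + 1 - r ∧ ∀ i, 0 < i → α i = if i ≤ r then 1 else 0) →
        zeta (N + 1) α σ = (-1) ^ r)
    ∧ ((¬ ∃ r < N + 1,
        α 0 = N + 1 - r ∧ ∀ i, 0 < i → α i = if i ≤ r then 1 else 0) →
        zeta (N + 1) α σ = 0) := by
  have hσt := trans_of_hct hσ
  have hz : zeta (N + 1) α σ = ∑ τ : Equiv.Perm (Fin (N + 1)), (Equiv.Perm.sign τ : ℤ) *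
      (if ∃ i0, ∀ j, (natToZ α + ∑ i : Fin (N + 1),
          Finsupp.single (i : ℕ) (((τ i : ℕ) : ℤ) - ((i : ℕ) : ℤ))) j
        = if j = i0 then ((N + 1 : ℕ) : ℤ) else 0 then 1 else 0) := by
    rw [zeta, chi]
    apply Finset.sum_congr rfl
    intro τ _
    rw [xi_eq (Nat.succ_pos N) hσt]
  constructor
  · rintro r hr ⟨h0, h1⟩
    set τ₀ : Equiv.Perm (Fin (N + 1)) := (Fin.cycleRange (⟨r, hr⟩ : Fin (N + 1)))⁻¹ with hτ₀
    have hiff : ∀ τ : Equiv.Perm (Fin (N + 1)),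
        (∃ i0, ∀ j, (natToZ α + ∑ i : Fin (N + 1),
            Finsupp.single (i : ℕ) (((τ i : ℕ) : ℤ) - ((i : ℕ) : ℤ))) j
          = if j = i0 then ((N + 1 : ℕ) : ℤ) else 0) ↔ τ = τ₀ := by
      intro τ
      constructor
      · exact hook_unique hα hr h0 h1 τ
      · rintro rfl
        exact ⟨0, hook_conc hα hr h0 h1⟩
    have h2 : zeta (N + 1) α σ
        = ∑ τ : Equiv.Perm (Fin (N + 1)), if τ = τ₀ then (Equiv.Perm.sign τ : ℤ) else 0 := by
      rw [hz]
      apply Finset.sum_congr rfl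
      intro τ _
      by_cases hP : ∃ i0, ∀ j, (natToZ α + ∑ i : Fin (N + 1),
          Finsupp.single (i : ℕ) (((τ i : ℕ) : ℤ) - ((i : ℕ) : ℤ))) j
        = if j = i0 then ((N + 1 : ℕ) : ℤ) else 0
      · rw [if_pos hP, if_pos ((hiff τ).mp hP), mul_one]
      · rw [if_neg hP, if_neg (fun he => hP ((hiff τ).mpr he)), mul_zero]
    rw [h2, Finset.sum_ite_eq' Finset.univ τ₀ (fun τ => (Equiv.Perm.sign τ : ℤ)),
      if_pos (Finset.mem_univ _)]
    have hsign : Equiv.Perm.sign τ₀ = (-1) ^ r := by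
      rw [hτ₀, Equiv.Perm.sign_inv, Fin.sign_cycleRange]
    rw [hsign]
    push_cast
    ring
  · intro hne
    rw [hz]
    apply Finset.sum_eq_zero
    intro τ _
    rw [if_neg, mul_zero]
    rintro ⟨i0, hcon⟩
    exact nonhook_no_conc hα (two_le_of_nonhook hα hne) τ i0 hcon
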